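/- arXiv:1602.03647 — 2 statements merged into one kernel-verified Lean document; each statement's English description precedes it below -/
import Mathlib

section
/- Let G and G' be simple graphs on vertex set {1,…,p} with edge sets E and E' such that E' ⊆ E. Then for every pair of vertices (i,j), the Ising correlations satisfy E_G[X_i X_j] ≥ E_{G'}[X_i X_j]. -/
open Real Finset
open scoped Classical

noncomputable section

/-- Value of a spin: `true ↦ +1`, `false ↦ -1`. -/
def confVal (b : Bool) : ℝ := if b then 1 else -1

/-- The Ising interaction `∑_{{i,j}∈E} x_i x_j` (each edge counted once). -/
def isingEnergy {p : ℕ} (G : SimpleGraph (Fin p)) (x : Fin p → Bool) : ℝ :=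
  (1 / 2) * ∑ i : Fin p, ∑ j : Fin p,
    if G.Adj i j then confVal (x i) * confVal (x j) else 0

/-- The partition function `Z_G`. -/
def isingZ {p : ℕ} (lam : ℝ) (G : SimpleGraph (Fin p)) : ℝ :=
  ∑ x : Fin p → Bool, Real.exp (lam * isingEnergy G x)

/-- The ferromagnetic Ising distribution `P_G(x)`. -/
def isingP {p : ℕ} (lam : ℝ) (G : SimpleGraph (Fin p)) (x : Fin p → Bool) : ℝ :=
  Real.exp (lam * isingEnergy G x) / isingZ lam G

/-- Kullback–Leibler divergence `D(P_G ‖ P_{G'})`. -/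
def isingKL {p : ℕ} (lam : ℝ) (G G' : SimpleGraph (Fin p)) : ℝ :=
  ∑ x : Fin p → Bool, isingP lam G x * Real.log (isingP lam G x / isingP lam G' x)

/-- The correlation `E_G[X_i X_j]`. -/
def isingCorr {p : ℕ} (lam : ℝ) (G : SimpleGraph (Fin p)) (i j : Fin p) : ℝ :=
  ∑ x : Fin p → Bool, isingP lam G x * (confVal (x i) * confVal (x j))

/-- Probability of an event under `P_G`. -/
def eventProb {p : ℕ} (lam : ℝ) (G : SimpleGraph (Fin p)) (S : Set (Fin p → Bool)) : ℝ :=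
  ∑ x : Fin p → Bool, if x ∈ S then isingP lam G x else 0

/-- `P_G[X_i = X_j]`. -/
def isingProbEq {p : ℕ} (lam : ℝ) (G : SimpleGraph (Fin p)) (i j : Fin p) : ℝ :=
  eventProb lam G {x | x i = x j}

/-- The edge set of `G` as a `Finset`. -/
def edgeFin {p : ℕ} (G : SimpleGraph (Fin p)) : Finset (Sym2 (Fin p)) :=
  (Set.toFinite G.edgeSet).toFinset

/-- The edit distance `|E Δ E'|` between two graphs. -/
def editDist {p : ℕ} (G G' : SimpleGraph (Fin p)) : ℕ :=
  ((edgeFin G \ edgeFin G') ∪ (edgeFin G' \ edgeFin G)).card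

/-!
Ginibre's duplicate-variable proof of Griffiths' inequalities. Write `σ_A(x) = ∏_{k ∈ A} x_k` and
`H_J(x) = ∑_a J_a σ_{A_a}(x)`. Expanding `exp (K σ_A) = cosh K + σ_A sinh K` one factor at a time
shows `∑_x σ_C(x) e^{H_K(x)} ≥ 0` whenever `K ≥ 0`. For `|J'| ≤ J`, the substitution `y = x q`
(pointwise product of spins) turns `∑_{x,y} (σ_C(x) - σ_C(y)) e^{H_J(x)} e^{H_{J'}(y)}` into
`∑_q (1 - σ_C(q)) ∑_x σ_C(x) e^{H_{K_q}(x)}` with `K_q = J + J' σ_A(q) ≥ 0`, a nonnegative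
combination of such sums; so correlations increase with the couplings. Deleting edges lowers the
Ising couplings.
-/

section Griffiths

variable {ι α : Type*}

lemma confVal_mul_self (b : Bool) : confVal b * confVal b = 1 := by
  cases b <;> simp [confVal]

lemma confVal_not (b : Bool) : confVal (!b) = -confVal b := by
  cases b <;> simp [confVal]

lemma confVal_beq (a b : Bool) : confVal (a == b) = confVal a * confVal b := by
  cases a <;> cases b <;> simp [confVal]

def spinProd (A : Finset ι) (x : ι → Bool) : ℝ :=
  ∏ k ∈ A, confVal (x k)

lemma spinProd_mul_self (A : Finset ι) (x : ι → Bool) : spinProd A x * spinProd A x = 1 := by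
  simp [spinProd, ← prod_mul_distrib, confVal_mul_self]

lemma spinProd_eq_one_or_eq_neg_one (A : Finset ι) (x : ι → Bool) :
    spinProd A x = 1 ∨ spinProd A x = -1 :=
  mul_self_eq_one_iff.mp (spinProd_mul_self A x)

lemma spinProd_beq (A : Finset ι) (x q : ι → Bool) :
    spinProd A (fun k => x k == q k) = spinProd A x * spinProd A q := by
  simp only [spinProd, ← prod_mul_distrib, confVal_beq]

section Weight

variable [Fintype α]

def spinWeight (A : α → Finset ι) (J : α → ℝ) (x : ι → Bool) : ℝ :=
  exp (∑ a, J a * spinProd (A a) x)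

lemma spinWeight_mul_spinWeight_beq (A : α → Finset ι) (J J' : α → ℝ) (x q : ι → Bool) :
    spinWeight A J x * spinWeight A J' (fun k => x k == q k) =
      exp (∑ a, (J a + J' a * spinProd (A a) q) * spinProd (A a) x) := by
  rw [spinWeight, spinWeight, ← exp_add, ← sum_add_distrib]
  simp only [spinProd_beq]
  congr 1
  exact sum_congr rfl fun a _ => by ring

end Weight

variable [DecidableEq ι]

lemma spinProd_mul_spinProd (A B : Finset ι) (x : ι → Bool) :
    spinProd A x * spinProd B x = spinProd (symmDiff A B) x := by
  have hunion : spinProd A x * spinProd B x = spinProd (A ∪ B) x * spinProd (A ∩ B) x :=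
    prod_union_inter.symm
  have hsdiff : spinProd (A ∪ B) x = spinProd ((A ∪ B) \ (A ∩ B)) x * spinProd (A ∩ B) x :=
    (prod_sdiff inter_subset_union).symm
  rw [hunion, hsdiff, mul_assoc, spinProd_mul_self, mul_one, symmDiff_eq_sup_sdiff_inf]
  rfl

variable [Fintype ι]

lemma sum_spinProd_eq_zero {C : Finset ι} (hC : C.Nonempty) :
    ∑ x : ι → Bool, spinProd C x = 0 := by
  obtain ⟨k₀, hk₀⟩ := hC
  have hflip : Function.Involutive fun x : ι → Bool => Function.update x k₀ (!x k₀) :=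
    fun x => by simp
  have hodd : ∀ x, spinProd C (Function.update x k₀ (!x k₀)) = -spinProd C x := by
    intro x
    rw [spinProd, ← mul_prod_erase _ _ hk₀, spinProd, ← mul_prod_erase _ _ hk₀,
      prod_congr rfl fun k hk => by rw [Function.update_of_ne (ne_of_mem_erase hk)]]
    simp [confVal_not]
  have := Equiv.sum_comp hflip.toPerm (spinProd C)
  simp only [Function.Involutive.coe_toPerm, hodd, sum_neg_distrib] at this
  linarith

lemma exp_mul_eq_cosh_add_mul_sinh {s : ℝ} (hs : s = 1 ∨ s = -1) (K : ℝ) :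
    exp (K * s) = cosh K + s * sinh K := by
  rcases hs with rfl | rfl
  · simp [cosh_add_sinh]
  · simp [← cosh_sub_sinh, sub_eq_add_neg]

theorem griffiths_first (A : α → Finset ι) (s : Finset α) {K : α → ℝ} (hK : ∀ a ∈ s, 0 ≤ K a)
    (C : Finset ι) :
    0 ≤ ∑ x : ι → Bool, spinProd C x * exp (∑ a ∈ s, K a * spinProd (A a) x) := by
  induction s using Finset.induction generalizing C with
  | empty =>
    rcases C.eq_empty_or_nonempty with rfl | hC
    · simp [spinProd]
    · simp [sum_spinProd_eq_zero hC]
  | @insert a s ha ih =>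
    have hK' : ∀ b ∈ s, 0 ≤ K b := fun b hb => hK b (mem_insert_of_mem hb)
    have hsinh : 0 ≤ sinh (K a) := sinh_nonneg_iff.mpr (hK a (mem_insert_self a s))
    have hexpand : ∀ x : ι → Bool,
        spinProd C x * exp (∑ b ∈ insert a s, K b * spinProd (A b) x) =
          cosh (K a) * (spinProd C x * exp (∑ b ∈ s, K b * spinProd (A b) x)) +
            sinh (K a) *
              (spinProd (symmDiff C (A a)) x * exp (∑ b ∈ s, K b * spinProd (A b) x)) := by
      intro x
      rw [sum_insert ha, exp_add,
        exp_mul_eq_cosh_add_mul_sinh (spinProd_eq_one_or_eq_neg_one _ x), ← spinProd_mul_spinProd]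
      ring
    simp only [hexpand, sum_add_distrib, ← mul_sum]
    have hC := ih hK' C
    have hCA := ih hK' (symmDiff C (A a))
    positivity

variable [Fintype α]

def spinCorr (A : α → Finset ι) (J : α → ℝ) (C : Finset ι) : ℝ :=
  (∑ x, spinProd C x * spinWeight A J x) / ∑ x, spinWeight A J x

lemma sum_spinWeight_pos (A : α → Finset ι) (J : α → ℝ) : 0 < ∑ x, spinWeight A J x :=
  sum_pos (fun _ _ => exp_pos _) univ_nonempty

lemma sum_comp_beq {M : Type*} [AddCommMonoid M] (x : ι → Bool) (f : (ι → Bool) → M) :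
    ∑ y, f y = ∑ q : ι → Bool, f (fun k => x k == q k) := by
  have hinv : Function.Involutive fun (q : ι → Bool) k => x k == q k := by
    intro q; funext k; show (x k == (x k == q k)) = q k; cases x k <;> cases q k <;> rfl
  exact (Equiv.sum_comp hinv.toPerm f).symm

theorem spinCorr_mono (A : α → Finset ι) {J J' : α → ℝ} (hJ : ∀ a, |J' a| ≤ J a)
    (C : Finset ι) : spinCorr A J' C ≤ spinCorr A J C := by
  rw [spinCorr, spinCorr, div_le_div_iff₀ (sum_spinWeight_pos A J') (sum_spinWeight_pos A J),
    ← sub_nonneg]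
  set K : (ι → Bool) → α → ℝ := fun q a => J a + J' a * spinProd (A a) q
  have hK : ∀ q a, 0 ≤ K q a := by
    intro q a
    have hJa := abs_le.mp (hJ a)
    rcases spinProd_eq_one_or_eq_neg_one (A a) q with h | h <;> simp only [K, h] <;> linarith
  have hcross :
      (∑ x, spinProd C x * spinWeight A J x) * ∑ y, spinWeight A J' y -
          (∑ y, spinProd C y * spinWeight A J' y) * ∑ x, spinWeight A J x =
        ∑ x, ∑ y, (spinProd C x - spinProd C y) * (spinWeight A J x * spinWeight A J' y) := by
    rw [mul_comm (∑ y, spinProd C y * spinWeight A J' y), sum_mul_sum, sum_mul_sum,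
      ← sum_sub_distrib]
    exact sum_congr rfl fun x _ => by rw [← sum_sub_distrib]; exact sum_congr rfl fun y _ => by ring
  have hsubst : ∀ x, ∑ y, (spinProd C x - spinProd C y) * (spinWeight A J x * spinWeight A J' y) =
      ∑ q, (1 - spinProd C q) * (spinProd C x * exp (∑ a, K q a * spinProd (A a) x)) := by
    intro x
    rw [sum_comp_beq x]
    refine sum_congr rfl fun q _ => ?_
    rw [spinWeight_mul_spinWeight_beq, spinProd_beq]
    ring
  rw [hcross, sum_congr rfl fun x _ => hsubst x, sum_comm]
  refine sum_nonneg fun q _ => ?_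
  rw [← mul_sum]
  have hq : 0 ≤ 1 - spinProd C q := by
    rcases spinProd_eq_one_or_eq_neg_one C q with h | h <;> rw [h] <;> norm_num
  exact mul_nonneg hq (griffiths_first A univ (fun a _ => hK q a) C)

end Griffiths

/-- Each ordered pair `(i, j)` with `i ~ j` carries `λ / 2`, so every edge contributes
`λ x_i x_j` in total. -/
def isingCoupling {p : ℕ} (lam : ℝ) (G : SimpleGraph (Fin p)) (e : Fin p × Fin p) : ℝ :=
  if G.Adj e.1 e.2 then lam / 2 else 0

lemma abs_isingCoupling_le {p : ℕ} {lam : ℝ} (hlam : 0 ≤ lam) {G G' : SimpleGraph (Fin p)}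
    (hsub : G' ≤ G) (e : Fin p × Fin p) : |isingCoupling lam G' e| ≤ isingCoupling lam G e := by
  unfold isingCoupling
  by_cases h' : G'.Adj e.1 e.2
  · rw [if_pos h', if_pos (hsub h'), abs_of_nonneg (by positivity)]
  · rw [if_neg h', abs_zero]
    split_ifs <;> positivity

lemma mul_isingEnergy {p : ℕ} (lam : ℝ) (G : SimpleGraph (Fin p)) (x : Fin p → Bool) :
    lam * isingEnergy G x = ∑ e, isingCoupling lam G e * spinProd {e.1, e.2} x := by
  rw [isingEnergy, Fintype.sum_prod_type, ← mul_assoc, mul_sum]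
  refine sum_congr rfl fun i _ => ?_
  rw [mul_sum]
  refine sum_congr rfl fun j _ => ?_
  by_cases h : G.Adj i j
  · rw [isingCoupling, if_pos h, if_pos h, spinProd, prod_pair (G.ne_of_adj h)]
    ring
  · simp [isingCoupling, h]

lemma isingCorr_eq_spinCorr {p : ℕ} (lam : ℝ) (G : SimpleGraph (Fin p)) (i j : Fin p) :
    isingCorr lam G i j =
      spinCorr (fun e : Fin p × Fin p => {e.1, e.2}) (isingCoupling lam G) (symmDiff {i} {j}) := by
  have hpair : ∀ x : Fin p → Bool, confVal (x i) * confVal (x j) = spinProd (symmDiff {i} {j}) x :=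
    fun x => by rw [← spinProd_mul_spinProd, spinProd, spinProd, prod_singleton, prod_singleton]
  simp only [spinCorr, spinWeight, ← mul_isingEnergy, isingCorr, isingP, isingZ, sum_div, hpair]
  exact sum_congr rfl fun x _ => by ring

/-- If `E' ⊆ E` then `E_G[X_i X_j] ≥ E_{G'}[X_i X_j]` for every pair. -/
theorem corr_mono_subgraph {p : ℕ} (lam : ℝ) (hlam : 0 < lam)
    (G G' : SimpleGraph (Fin p)) (hsub : G' ≤ G) :
    ∀ i j : Fin p, isingCorr lam G i j ≥ isingCorr lam G' i j := by
  intro i j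
  rw [ge_iff_le, isingCorr_eq_spinCorr, isingCorr_eq_spinCorr]
  exact spinCorr_mono _ (abs_isingCoupling_le hlam.le hsub) _

end
end

section
/- Let G be a simple graph on vertex set {1,…,p} containing an edge (i,j), and let G' be the graph obtained from G by removing the single edge (i,j). Then the Ising distributions satisfy the exact identity P_G[X_i = X_j] / (1 − P_G[X_i = X_j]) = e^{2λ} · P_{G'}[X_i = X_j] / (1 − P_{G'}[X_i = X_j]). -/
/-!
Split the energy of `G` as the energy of `G' = G - {i,j}` plus the edge term `x_i x_j`, which is
`+1` on the event `X_i = X_j` and `-1` on its complement. Hence the Boltzmann weights of `G` are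
those of `G'` multiplied by `e^{λ}` on the event and by `e^{-λ}` off it. The odds of an event are
the ratio of its total weight to that of its complement (the partition function cancels), so the
odds under `G` are `e^{λ} / e^{-λ} = e^{2λ}` times the odds under `G'`.
-/

open Real Finset
open scoped Classical

noncomputable section

lemma confVal_mul_confVal (a b : Bool) : confVal a * confVal b = if a = b then 1 else -1 := by
  cases a <;> cases b <;> norm_num [confVal]

lemma SimpleGraph.adj_iff_deleteEdges_adj_or {V : Type*} (G : SimpleGraph V) {i j : V}
    (hij : G.Adj i j) (a b : V) :
    G.Adj a b ↔ (G.deleteEdges {s(i, j)}).Adj a b ∨ (a = i ∧ b = j) ∨ (a = j ∧ b = i) := by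
  rw [SimpleGraph.deleteEdges_adj, Set.mem_singleton_iff, Sym2.eq_iff]
  constructor
  · tauto
  · rintro (⟨h, -⟩ | ⟨rfl, rfl⟩ | ⟨rfl, rfl⟩)
    exacts [h, hij, hij.symm]

section Energy

variable {p : ℕ} (G : SimpleGraph (Fin p)) {i j : Fin p}

lemma isingEnergy_deleteEdges_add (hij : G.Adj i j) (x : Fin p → Bool) :
    isingEnergy (G.deleteEdges {s(i, j)}) x + confVal (x i) * confVal (x j) =
      isingEnergy G x := by
  have hadj := G.adj_iff_deleteEdges_adj_or hij
  have hij' : ¬(G.deleteEdges {s(i, j)}).Adj i j := by simp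
  -- so that `if G'.Adj a b` below elaborates with the classical instance used in `isingEnergy`
  generalize G.deleteEdges {s(i, j)} = G' at hadj hij' ⊢
  have hterm : ∀ a b : Fin p, (if G.Adj a b then confVal (x a) * confVal (x b) else 0) =
      (if G'.Adj a b then confVal (x a) * confVal (x b) else 0) +
        ((if a = i then if b = j then confVal (x a) * confVal (x b) else 0 else 0) +
          (if a = j then if b = i then confVal (x a) * confVal (x b) else 0 else 0)) := by
    intro a b
    have hne : i ≠ j := hij.ne
    rw [hadj a b]
    split_ifs <;> simp_all [G'.adj_comm j i]
  simp only [isingEnergy, hterm, sum_add_distrib, sum_ite_irrel, sum_ite_eq', mem_univ, if_true,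
    sum_const_zero]
  rw [mul_comm (confVal (x j))]
  ring

lemma sum_exp_isingEnergy_eq_of_edge_term (hij : G.Adj i j) (lam c : ℝ)
    (T : Finset (Fin p → Bool)) (hT : ∀ x ∈ T, confVal (x i) * confVal (x j) = c) :
    ∑ x ∈ T, exp (lam * isingEnergy G x) =
      exp (lam * c) * ∑ x ∈ T, exp (lam * isingEnergy (G.deleteEdges {s(i, j)}) x) := by
  rw [mul_sum]
  refine sum_congr rfl fun x hx => ?_
  rw [← isingEnergy_deleteEdges_add G hij x, hT x hx, mul_add, exp_add, mul_comm]

end Energy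

section Odds

variable {p : ℕ} (lam : ℝ) (G : SimpleGraph (Fin p))

lemma isingZ_pos : 0 < isingZ lam G :=
  sum_pos (fun _ _ => exp_pos _) univ_nonempty

lemma eventProb_eq_sum_div (S : Set (Fin p → Bool)) :
    eventProb lam G S = (∑ x with x ∈ S, exp (lam * isingEnergy G x)) / isingZ lam G := by
  rw [eventProb, sum_filter, sum_div]
  simp only [isingP, ite_div, zero_div]

lemma one_sub_eventProb (S : Set (Fin p → Bool)) :
    1 - eventProb lam G S = (∑ x with x ∉ S, exp (lam * isingEnergy G x)) / isingZ lam G := by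
  have hZ : isingZ lam G = ∑ x with x ∈ S, exp (lam * isingEnergy G x) +
      ∑ x with x ∉ S, exp (lam * isingEnergy G x) :=
    (sum_filter_add_sum_filter_not _ _ _).symm
  rw [eventProb_eq_sum_div, eq_div_iff (isingZ_pos lam G).ne', sub_mul,
    div_mul_cancel₀ _ (isingZ_pos lam G).ne', one_mul, hZ]
  ring

lemma eventProb_div_one_sub_eventProb (S : Set (Fin p → Bool)) :
    eventProb lam G S / (1 - eventProb lam G S) =
      (∑ x with x ∈ S, exp (lam * isingEnergy G x)) /
        ∑ x with x ∉ S, exp (lam * isingEnergy G x) := by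
  rw [one_sub_eventProb, eventProb_eq_sum_div, div_div_div_cancel_right₀ (isingZ_pos lam G).ne']

end Odds

theorem odds_ratio_single_edge_general {p : ℕ} (lam : ℝ)
    (G G' : SimpleGraph (Fin p)) (i j : Fin p) (hij : G.Adj i j)
    (hG' : G' = G.deleteEdges {s(i, j)}) :
    isingProbEq lam G i j / (1 - isingProbEq lam G i j) =
      Real.exp (2 * lam) *
        (isingProbEq lam G' i j / (1 - isingProbEq lam G' i j)) := by
  subst hG'
  simp only [isingProbEq, eventProb_div_one_sub_eventProb]
  rw [sum_exp_isingEnergy_eq_of_edge_term G hij lam 1 _ fun x hx => ?agree,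
    sum_exp_isingEnergy_eq_of_edge_term G hij lam (-1) _ fun x hx => ?disagree]
  case agree | disagree => simp_all [confVal_mul_confVal]
  rw [mul_div_mul_comm, ← exp_sub]
  congr 2
  ring

/-- Removing a single edge `(i,j)` changes the odds of `X_i = X_j`
by exactly a factor `e^{2λ}`. -/
theorem odds_ratio_single_edge {p : ℕ} (lam : ℝ) (hlam : 0 < lam)
    (G G' : SimpleGraph (Fin p)) (i j : Fin p) (hij : G.Adj i j)
    (hG' : G' = G.deleteEdges {s(i, j)}) :
    isingProbEq lam G i j / (1 - isingProbEq lam G i j) =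
      Real.exp (2 * lam) *
        (isingProbEq lam G' i j / (1 - isingProbEq lam G' i j)) :=
  odds_ratio_single_edge_general lam G G' i j hij hG'

end
end
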